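/- arXiv:1605.07949 — 4 statements merged into one kernel-verified Lean document; each statement's English description precedes it below -/
import Mathlib

section
/- Let F be a field of characteristic p and P = C_{p^m} × C_{p^n} a direct product of two cyclic p-groups. Then the Loewy length of F[P] equals p^m + p^n − 1. -/
/-!
Write `q = p ^ m`, `r = p ^ n`, and let `a = g - 1`, `b = h - 1` for the generators `g`, `h` of the
two cyclic factors. The augmentation ideal is maximal, so it contains the Jacobson radical, and it
is spanned by the `x - 1`, hence generated by `a` and `b`. In characteristic `p` we get
`a ^ q = g ^ q - 1 = 0` and likewise `b ^ r = 0`, so `a` and `b` lie in the radical, and the radical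
is `(a, b)`. Every monomial `a ^ i * b ^ j` with `i + j = q + r - 1` has `i ≥ q` or `j ≥ r`, so
`(a, b) ^ (q + r - 1) = 0`. On the other hand `a ^ (q - 1) * b ^ (r - 1)` has coefficient `±1` at
the identity, so `(a, b) ^ (q + r - 2) ≠ 0`.
-/

open MonoidAlgebra

namespace Ideal

theorem sup_pow_add_add_one_le {R : Type*} [CommSemiring R] (I J : Ideal R) (n m : ℕ) :
    (I ⊔ J) ^ (n + m + 1) ≤ I ^ (n + 1) ⊔ J ^ (m + 1) := by
  rw [← add_eq_sup, ← add_eq_sup, add_pow, sum_eq_sup]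
  refine Finset.sup_le fun i hi => ?_
  rw [Finset.mem_range] at hi
  by_cases hn : n + 1 ≤ i
  · exact mul_le_left.trans (mul_le_left.trans ((pow_le_pow_right hn).trans le_sup_left))
  · exact mul_le_left.trans
      (mul_le_right.trans ((pow_le_pow_right (by omega)).trans le_sup_right))

theorem span_pair_pow_eq_bot {R : Type*} [CommSemiring R] {a b : R} {n m : ℕ}
    (ha : a ^ (n + 1) = 0) (hb : b ^ (m + 1) = 0) : span {a, b} ^ (n + m + 1) = ⊥ := by
  rw [span_insert, ← le_bot_iff]
  refine (sup_pow_add_add_one_le _ _ n m).trans ?_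
  rw [span_singleton_pow, span_singleton_pow, ha, hb, span_singleton_eq_bot.mpr rfl, sup_idem]

end Ideal

namespace MonoidAlgebra

variable {k G : Type*}

theorem single_sub_one_mem_of_mem_closure [Ring k] [Monoid G] (I : Ideal k[G]) {S : Set G}
    (hS : ∀ s ∈ S, single s (1 : k) - 1 ∈ I) {x : G} (hx : x ∈ Submonoid.closure S) :
    single x (1 : k) - 1 ∈ I := by
  induction hx using Submonoid.closure_induction with
  | mem s hs => exact hS s hs
  | one => simp [← one_def]
  | mul x y _ _ hx hy =>
    have hxy : single (x * y) (1 : k) - 1 = single x 1 * (single y 1 - 1) + (single x 1 - 1) := by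
      rw [mul_sub, single_mul_single, mul_one, mul_one]
      abel
    rw [hxy]
    exact I.add_mem (I.mul_mem_left _ hy) hx

theorem sub_algebraMap_lift_one_mem_span [CommRing k] [Monoid G] (f : k[G]) :
    f - algebraMap k k[G] (lift k k G 1 f) ∈
      Ideal.span (Set.range fun x : G => single x (1 : k) - 1) := by
  induction f using MonoidAlgebra.induction_on with
  | of x =>
    simpa [← one_def] using
      Ideal.subset_span (Set.mem_range_self (f := fun x : G => single x (1 : k) - 1) x)
  | add f g hf hg => simpa [add_sub_add_comm] using add_mem hf hg
  | smul c f hf =>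
    simpa [Algebra.smul_def, mul_sub] using Ideal.mul_mem_left _ (algebraMap k k[G] c) hf

theorem ker_lift_one_le_span [CommRing k] [Monoid G] :
    RingHom.ker (lift k k G 1) ≤ Ideal.span (Set.range fun x : G => single x (1 : k) - 1) :=
  fun f hf => by simpa [RingHom.mem_ker.mp hf] using sub_algebraMap_lift_one_mem_span f

theorem jacobson_bot_le_ker_lift_one [Field k] [Monoid G] :
    Ideal.jacobson (⊥ : Ideal k[G]) ≤ RingHom.ker (lift k k G 1) :=
  have := RingHom.ker_isMaximal_of_surjective (lift k k G 1) fun c => ⟨single 1 c, by simp⟩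
  sInf_le ⟨bot_le, this⟩

theorem single_sub_one_pow_char_pow_eq_zero [CommRing k] [Nontrivial k] [Monoid G] (p : ℕ)
    [Fact p.Prime] [CharP k p] {u : G} {n : ℕ} (hu : u ^ p ^ n = 1) :
    (single u (1 : k) - 1) ^ p ^ n = 0 := by
  have := charP_of_injective_algebraMap' k (A := k[G]) p
  rw [sub_pow_char_pow_of_commute p n (Commute.one_right _), single_pow, one_pow, one_pow, hu,
    one_def, sub_self]

theorem single_sub_one_pow_eq_sum [Ring k] [Monoid G] (u : G) (i : ℕ) :
    (single u (1 : k) - 1) ^ i =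
      ∑ j ∈ Finset.range (i + 1), single (u ^ j) ((-1) ^ (i - j) * (i.choose j : k)) := by
  rw [sub_eq_add_neg, (Commute.neg_one_right _).add_pow]
  refine Finset.sum_congr rfl fun j _ => ?_
  rw [single_pow, one_pow, one_def, ← single_neg, single_pow, one_pow, natCast_def,
    single_mul_single, single_mul_single, mul_one, mul_one, one_mul]

theorem coeff_single_sub_one_pow_one [Ring k] [Monoid G] {u : G} {i : ℕ} (hi : i < orderOf u) :
    ((single u (1 : k) - 1) ^ i).coeff 1 = (-1) ^ i := by
  classical
  rw [single_sub_one_pow_eq_sum, coeff_sum, Finset.sum_apply', Finset.sum_eq_single 0]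
  · simp
  · intro j hj hj0
    rw [coeff_single, Finsupp.single_apply, if_neg]
    exact pow_ne_one_of_lt_orderOf hj0 ((Finset.mem_range_succ_iff.mp hj).trans_lt hi)
  · simp

theorem coeff_mapDomain_inl_mul_mapDomain_inr [Semiring k] {A B : Type*} [Monoid A] [Monoid B]
    (x : k[A]) (y : k[B]) (a : A) (b : B) :
    (mapDomain (MonoidHom.inl A B) x * mapDomain (MonoidHom.inr A B) y).coeff (a, b) =
      x.coeff a * y.coeff b := by
  classical
  induction x using MonoidAlgebra.induction_linear with
  | zero => simp
  | add => simp_all [add_mul, mapDomain_add]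
  | single a' c =>
    induction y using MonoidAlgebra.induction_linear with
    | zero => simp
    | add => simp_all [mul_add, mapDomain_add]
    | single b' d =>
      simp only [mapDomain_single, MonoidHom.inl_apply, MonoidHom.inr_apply, single_mul_single,
        Prod.mk_mul_mk, mul_one, one_mul, coeff_single, Finsupp.single_apply, Prod.mk.injEq]
      split_ifs <;> simp_all

theorem jacobson_bot_pow_eq_bot_of_closure_eq_top [Field k] [CommMonoid G] {g h : G}
    (hgh : Submonoid.closure {g, h} = ⊤) {i j : ℕ}
    (hg : (single g (1 : k) - 1) ^ (i + 1) = 0) (hh : (single h (1 : k) - 1) ^ (j + 1) = 0) :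
    Ideal.jacobson (⊥ : Ideal k[G]) ^ (i + j + 1) = ⊥ := by
  have hJ : Ideal.jacobson (⊥ : Ideal k[G]) ≤ Ideal.span {single g 1 - 1, single h 1 - 1} := by
    refine jacobson_bot_le_ker_lift_one.trans (ker_lift_one_le_span.trans (Ideal.span_le.mpr ?_))
    rintro _ ⟨x, rfl⟩
    refine single_sub_one_mem_of_mem_closure _ ?_ (hgh ▸ Submonoid.mem_top x)
    rintro s (rfl | rfl)
    exacts [Ideal.subset_span (by simp), Ideal.subset_span (by simp)]
  exact le_bot_iff.mp ((Ideal.pow_right_mono hJ _).trans (Ideal.span_pair_pow_eq_bot hg hh).le)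

theorem jacobson_bot_pow_ne_bot [CommRing k] [Nontrivial k] {A B : Type*}
    [CommMonoid A] [CommMonoid B] {u : A} {v : B} {i j : ℕ}
    (hi : i < orderOf u) (hj : j < orderOf v)
    (hu : IsNilpotent (single (u, (1 : B)) (1 : k) - 1))
    (hv : IsNilpotent (single ((1 : A), v) (1 : k) - 1)) :
    Ideal.jacobson (⊥ : Ideal k[A × B]) ^ (i + j) ≠ ⊥ := by
  set a : k[A × B] := single (u, 1) 1 - 1
  set b : k[A × B] := single (1, v) 1 - 1
  have mem_jacobson {x : k[A × B]} (hx : IsNilpotent x) : x ∈ Ideal.jacobson ⊥ := by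
    obtain ⟨n, hn⟩ := hx
    exact Ideal.radical_le_jacobson ⟨n, by simp [hn]⟩
  have hmem : a ^ i * b ^ j ∈ Ideal.jacobson (⊥ : Ideal k[A × B]) ^ (i + j) := by
    rw [pow_add]
    exact Ideal.mul_mem_mul (Ideal.pow_mem_pow (mem_jacobson hu) i)
      (Ideal.pow_mem_pow (mem_jacobson hv) j)
  have hcoeff : (a ^ i * b ^ j).coeff 1 = (-1) ^ (i + j) := by
    have ha := map_pow (mapDomainRingHom k (MonoidHom.inl A B)) (single u 1 - 1) i
    have hb := map_pow (mapDomainRingHom k (MonoidHom.inr A B)) (single v 1 - 1) j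
    simp only [map_sub, map_one, mapDomainRingHom_apply, mapDomain_single, MonoidHom.inl_apply,
      MonoidHom.inr_apply] at ha hb
    rw [← ha, ← hb, Prod.one_eq_mk, coeff_mapDomain_inl_mul_mapDomain_inr,
      coeff_single_sub_one_pow_one hi, coeff_single_sub_one_pow_one hj, pow_add]
  intro hbot
  rw [hbot, Ideal.mem_bot] at hmem
  rw [hmem, coeff_zero, Finsupp.coe_zero, Pi.zero_apply] at hcoeff
  exact neg_one_pow_ne_zero _ hcoeff.symm

end MonoidAlgebra

theorem Submonoid.closure_ofAdd_one_prod_eq_top (q r : ℕ) [NeZero q] [NeZero r] :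
    closure {((.ofAdd 1, 1) : Multiplicative (ZMod q) × Multiplicative (ZMod r)),
      (1, .ofAdd 1)} = ⊤ := by
  refine eq_top_iff.mpr fun ⟨x, y⟩ _ => ?_
  have hxy : ((x, y) : Multiplicative (ZMod q) × Multiplicative (ZMod r)) =
      (.ofAdd 1, 1) ^ x.toAdd.val * (1, .ofAdd 1) ^ y.toAdd.val := by
    simp [← ofAdd_nsmul]
  rw [hxy]
  exact mul_mem (pow_mem (subset_closure (by simp)) _) (pow_mem (subset_closure (by simp)) _)

theorem stmt7_general (F : Type*) [Field F] (p m n : ℕ) [Fact p.Prime] [CharP F p] :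
    sInf {k : ℕ | (Ideal.jacobson (⊥ : Ideal (MonoidAlgebra F
        (Multiplicative (ZMod (p ^ m)) × Multiplicative (ZMod (p ^ n)))))) ^ k = ⊥}
      = p ^ m + p ^ n - 1 := by
  have hq : 0 < p ^ m := pow_pos (Fact.out : p.Prime).pos m
  have hr : 0 < p ^ n := pow_pos (Fact.out : p.Prime).pos n
  have : NeZero (p ^ m) := ⟨hq.ne'⟩
  have : NeZero (p ^ n) := ⟨hr.ne'⟩
  have ha : (single (Multiplicative.ofAdd (1 : ZMod (p ^ m)), (1 : Multiplicative (ZMod (p ^ n))))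
      (1 : F) - 1) ^ (p ^ m - 1 + 1) = 0 := by
    rw [Nat.sub_add_cancel hq]
    exact single_sub_one_pow_char_pow_eq_zero p (by simp [← ofAdd_nsmul])
  have hb : (single ((1 : Multiplicative (ZMod (p ^ m))), Multiplicative.ofAdd (1 : ZMod (p ^ n)))
      (1 : F) - 1) ^ (p ^ n - 1 + 1) = 0 := by
    rw [Nat.sub_add_cancel hr]
    exact single_sub_one_pow_char_pow_eq_zero p (by simp [← ofAdd_nsmul])
  change nilpotencyClass (Ideal.jacobson ⊥) = _
  rw [show p ^ m + p ^ n - 1 = p ^ m - 1 + (p ^ n - 1) + 1 by omega, nilpotencyClass_eq_succ_iff]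
  refine ⟨jacobson_bot_pow_eq_bot_of_closure_eq_top
    (Submonoid.closure_ofAdd_one_prod_eq_top _ _) ha hb,
    jacobson_bot_pow_ne_bot ?_ ?_ ⟨_, ha⟩ ⟨_, hb⟩⟩
  all_goals rw [orderOf_ofAdd_eq_addOrderOf, ZMod.addOrderOf_one]; omega

theorem stmt7 (F : Type*) [Field F] (p m n : ℕ) [Fact p.Prime] [CharP F p]
    (hm : 1 ≤ m) (hn : 1 ≤ n) :
    sInf {k : ℕ | (Ideal.jacobson (⊥ : Ideal (MonoidAlgebra F
        (Multiplicative (ZMod (p ^ m)) × Multiplicative (ZMod (p ^ n)))))) ^ k = ⊥}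
      = p ^ m + p ^ n - 1 :=
  stmt7_general F p m n
end

section
/- Let D = C_{2^m} × C_{2^n} with m > n ≥ 1. Then the order of the automorphism group of D equals 2^{m + 3n − 2}. -/
/-!
Let `A = ZMod (p ^ m) × ZMod (p ^ n)` with `n < m`. An endomorphism of `A` is determined by the
images `(a, c)` of `(1, 0)` and `(b', d)` of `(0, 1)`; here `b'` is killed by `p ^ n`, so
`b' = p ^ (m - n) * b` for a unique `b : ZMod (p ^ n)`. Since `p` divides the upper right entry of
the "matrix" `[[a, p ^ (m - n) * b], [c, d]]`, it becomes triangular modulo `p`, and the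
endomorphism is an automorphism iff `a` and `d` are units. Hence
`|Aut A| = φ(p ^ m) * p ^ n * p ^ n * φ(p ^ n) = p ^ (m + 3n - 2) * (p - 1) ^ 2`.
-/

open Function

namespace ZMod

section Inclusion

variable {M N : ℕ} (h : N ∣ M)

noncomputable def inclusionOfDvd : ZMod N →+ ZMod M :=
  ZMod.lift N ⟨zmultiplesHom (ZMod M) ((M / N : ℕ) : ZMod M), by
    simp [← Nat.cast_mul, Nat.mul_div_cancel' h]⟩

lemma inclusionOfDvd_intCast (k : ℤ) :
    inclusionOfDvd h k = k * ((M / N : ℕ) : ZMod M) := by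
  simp [inclusionOfDvd]

lemma inclusionOfDvd_natCast (k : ℕ) :
    inclusionOfDvd h k = ((k * (M / N) : ℕ) : ZMod M) := by
  simpa using inclusionOfDvd_intCast h k

lemma dvd_inclusionOfDvd (t : ZMod N) : ((M / N : ℕ) : ZMod M) ∣ inclusionOfDvd h t := by
  obtain ⟨k, rfl⟩ := intCast_surjective t
  rw [inclusionOfDvd_intCast]
  exact dvd_mul_left _ _

variable [NeZero M]

lemma inclusionOfDvd_injective : Injective (inclusionOfDvd h) := by
  obtain ⟨q, rfl⟩ := h
  have hN : 0 < N := Nat.pos_of_ne_zero (left_ne_zero_of_mul (NeZero.ne (N * q)))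
  refine (lift_injective N).mpr fun k hk => ?_
  simp only [zmultiplesHom_apply, zsmul_eq_mul, Nat.mul_div_cancel_left q hN,
    ← Int.cast_natCast (R := ZMod (N * q)), ← Int.cast_mul, intCast_zmod_eq_zero_iff_dvd] at hk
  rw [intCast_zmod_eq_zero_iff_dvd]
  push_cast at hk
  exact Int.dvd_of_mul_dvd_mul_right (by exact_mod_cast right_ne_zero_of_mul (NeZero.ne (N * q))) hk

lemma exists_inclusionOfDvd_eq {y : ZMod M} (hy : N • y = 0) : ∃ x, inclusionOfDvd h x = y := by
  obtain ⟨q, rfl⟩ := h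
  have hN : 0 < N := Nat.pos_of_ne_zero (left_ne_zero_of_mul (NeZero.ne (N * q)))
  rw [← natCast_zmod_val y, nsmul_eq_mul, ← Nat.cast_mul, natCast_eq_zero_iff] at hy
  obtain ⟨t, ht⟩ := Nat.dvd_of_mul_dvd_mul_left hN hy
  refine ⟨t, ?_⟩
  rw [inclusionOfDvd_natCast, Nat.mul_div_cancel_left q hN, Nat.mul_comm t q, ← ht]
  exact natCast_zmod_val y

lemma inclusionOfDvd_castHom_mul (u : ZMod M) (t : ZMod N) :
    inclusionOfDvd h (castHom h (ZMod N) u * t) = u * inclusionOfDvd h t := by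
  rw [← natCast_zmod_val u, map_natCast, ← nsmul_eq_mul, map_nsmul, nsmul_eq_mul]

end Inclusion

section ProdMatrix

variable {M N : ℕ}

lemma addMonoidHom_prod_ext {A : Type*} [AddGroup A] {f g : ZMod M × ZMod N →+ A}
    (h₁ : f (1, 0) = g (1, 0)) (h₂ : f (0, 1) = g (0, 1)) : f = g := by
  refine AddMonoidHom.ext fun ⟨u, v⟩ => ?_
  obtain ⟨k, rfl⟩ := intCast_surjective u
  obtain ⟨l, rfl⟩ := intCast_surjective v
  have hkl : ((k : ZMod M), (l : ZMod N)) = k • ((1 : ZMod M), (0 : ZMod N)) + l • (0, 1) := by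
    simp
  rw [hkl, map_add, map_add, map_zsmul, map_zsmul, map_zsmul, map_zsmul, h₁, h₂]

variable (h : N ∣ M)

noncomputable def prodMatrixHom (a : ZMod M) (b c d : ZMod N) :
    ZMod M × ZMod N →+ ZMod M × ZMod N :=
  AddMonoidHom.mk'
    (fun x => (a * x.1 + inclusionOfDvd h (x.2 * b), castHom h (ZMod N) x.1 * c + x.2 * d))
    fun x y => by
      simp only [Prod.fst_add, Prod.snd_add, add_mul, mul_add, map_add, Prod.mk_add_mk]
      congr 1 <;> abel

variable (a : ZMod M) (b c d : ZMod N)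

lemma prodMatrixHom_apply (x : ZMod M × ZMod N) : prodMatrixHom h a b c d x =
    (a * x.1 + inclusionOfDvd h (x.2 * b), castHom h (ZMod N) x.1 * c + x.2 * d) :=
  rfl

@[simp]
lemma prodMatrixHom_apply_one_zero : prodMatrixHom h a b c d (1, 0) = (a, c) := by
  simp only [prodMatrixHom_apply, map_one, map_zero, mul_one, one_mul, zero_mul, add_zero]

@[simp]
lemma prodMatrixHom_apply_zero_one :
    prodMatrixHom h a b c d (0, 1) = (inclusionOfDvd h b, d) := by
  simp [prodMatrixHom_apply]

lemma exists_eq_prodMatrixHom [NeZero M] (F : ZMod M × ZMod N →+ ZMod M × ZMod N) :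
    ∃ b, F = prodMatrixHom h (F (1, 0)).1 b (F (1, 0)).2 (F (0, 1)).2 := by
  have htorsion : N • (F (0, 1)).1 = 0 := by
    rw [← Prod.smul_fst, ← map_nsmul, Prod.smul_mk, nsmul_zero, nsmul_eq_mul, mul_one,
      natCast_self, Prod.mk_zero_zero, map_zero, Prod.fst_zero]
  obtain ⟨b, hb⟩ := exists_inclusionOfDvd_eq h htorsion
  exact ⟨b, addMonoidHom_prod_ext (by simp) (by simp [hb])⟩

end ProdMatrix

section PrimePower

variable {p m n : ℕ}

lemma castHom_prime_mul (hk : m ≠ 0) (z : ZMod (p ^ m)) :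
    castHom (dvd_pow_self p hk) (ZMod p) (p * z) = 0 := by
  rw [map_mul, map_natCast, natCast_self, zero_mul]

variable [hp : Fact p.Prime]

lemma isUnit_castHom_iff (hk : m ≠ 0) (x : ZMod (p ^ m)) :
    IsUnit (castHom (dvd_pow_self p hk) (ZMod p) x) ↔ IsUnit x := by
  rw [← natCast_zmod_val x, map_natCast,
    isUnit_natCast_iff_not_dvd_pow hp.out (Nat.pos_of_ne_zero hk), isUnit_iff_coprime,
    Nat.coprime_comm, hp.out.coprime_iff_not_dvd]

lemma prime_dvd_inclusionOfDvd (hnm : n < m) (t : ZMod (p ^ n)) :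
    (p : ZMod (p ^ m)) ∣ inclusionOfDvd (pow_dvd_pow p hnm.le) t := by
  refine dvd_trans (Nat.cast_dvd_cast ?_) (dvd_inclusionOfDvd _ t)
  rw [Nat.pow_div hnm.le hp.out.pos]
  exact dvd_pow_self p (Nat.sub_ne_zero_of_lt hnm)

lemma prodMatrixHom_injective (hnm : n < m) {a : ZMod (p ^ m)} (ha : IsUnit a)
    (b c : ZMod (p ^ n)) {d : ZMod (p ^ n)} (hd : IsUnit d) :
    Injective (prodMatrixHom (pow_dvd_pow p hnm.le) a b c d) := by
  have hm : m ≠ 0 := by omega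
  rw [injective_iff_map_eq_zero]
  rintro ⟨u, v⟩ huv
  simp only [prodMatrixHom_apply, Prod.mk_eq_zero] at huv
  obtain ⟨e₁, e₂⟩ := huv
  have hv : v = castHom (pow_dvd_pow p hnm.le) (ZMod (p ^ n)) u * -(c * ↑hd.unit⁻¹) := by
    calc v = v * d * ↑hd.unit⁻¹ := by rw [mul_assoc, hd.mul_val_inv, mul_one]
      _ = _ := by rw [show v * d = _ from eq_neg_of_add_eq_zero_right e₂]; ring
  obtain ⟨z, hz⟩ := prime_dvd_inclusionOfDvd hnm (-(c * (↑hd.unit⁻¹ : ZMod (p ^ n))) * b)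
  have hu : (a + p * z) * u = 0 := by
    rw [hv, mul_assoc, inclusionOfDvd_castHom_mul, hz] at e₁
    linear_combination e₁
  have hunit : IsUnit (a + p * z) := by
    rw [← isUnit_castHom_iff hm, map_add, castHom_prime_mul hm, add_zero, isUnit_castHom_iff hm]
    exact ha
  obtain rfl : u = 0 := hunit.mul_right_eq_zero.mp hu
  simp [hv]

lemma isUnit_of_prodMatrixHom_surjective (hnm : n < m) (hn : n ≠ 0) {a : ZMod (p ^ m)}
    {b c d : ZMod (p ^ n)} (hF : Surjective (prodMatrixHom (pow_dvd_pow p hnm.le) a b c d)) :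
    IsUnit a ∧ IsUnit d := by
  have hm : m ≠ 0 := by omega
  set ρ := castHom (dvd_pow_self p hm) (ZMod p)
  set ρ' := castHom (dvd_pow_self p hn) (ZMod p)
  have hρ' (u : ZMod (p ^ m)) : ρ' (castHom (pow_dvd_pow p hnm.le) (ZMod (p ^ n)) u) = ρ u :=
    congr($(castHom_comp (dvd_pow_self p hn) (pow_dvd_pow p hnm.le)) u)
  have hρ (t : ZMod (p ^ n)) : ρ (inclusionOfDvd (pow_dvd_pow p hnm.le) t) = 0 := by
    obtain ⟨z, hz⟩ := prime_dvd_inclusionOfDvd hnm t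
    rw [hz, castHom_prime_mul hm]
  obtain ⟨⟨u, v⟩, huv⟩ := hF (1, 0)
  obtain ⟨⟨u', v'⟩, huv'⟩ := hF (0, 1)
  simp only [prodMatrixHom_apply, Prod.mk.injEq] at huv huv'
  have ha : IsUnit (ρ a) := by
    have := congrArg ρ huv.1
    rw [map_add, map_mul, hρ, add_zero, map_one] at this
    exact .of_mul_eq_one _ this
  have hu' : ρ u' = 0 := by
    have := congrArg ρ huv'.1
    rw [map_add, map_mul, hρ, add_zero, map_zero] at this
    exact ha.mul_right_eq_zero.mp this
  have hd : IsUnit (ρ' d) := by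
    have := congrArg ρ' huv'.2
    rw [map_add, map_mul, map_mul, hρ', hu', zero_mul, zero_add, map_one] at this
    exact .of_mul_eq_one_right _ this
  exact ⟨(isUnit_castHom_iff hm a).mp ha, (isUnit_castHom_iff hn d).mp hd⟩

noncomputable def prodMatrixAddAut (hnm : n < m)
    (q : (ZMod (p ^ m))ˣ × ZMod (p ^ n) × ZMod (p ^ n) × (ZMod (p ^ n))ˣ) :
    AddAut (ZMod (p ^ m) × ZMod (p ^ n)) :=
  AddEquiv.ofBijective (prodMatrixHom _ q.1 q.2.1 q.2.2.1 q.2.2.2)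
    (prodMatrixHom_injective hnm q.1.isUnit _ _ q.2.2.2.isUnit).bijective_of_finite

lemma prodMatrixAddAut_bijective (hnm : n < m) (hn : n ≠ 0) :
    Bijective (prodMatrixAddAut (p := p) hnm) := by
  refine ⟨fun ⟨a, b, c, d⟩ ⟨a', b', c', d'⟩ heq => ?_, fun F => ?_⟩
  · have h₁ := congr($heq (1, 0))
    have h₂ := congr($heq (0, 1))
    simp only [prodMatrixAddAut, AddEquiv.ofBijective_apply, prodMatrixHom_apply_one_zero,
      prodMatrixHom_apply_zero_one, Prod.mk.injEq] at h₁ h₂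
    obtain rfl := inclusionOfDvd_injective _ h₂.1
    simp [Units.ext h₁.1, h₁.2, Units.ext h₂.2]
  · obtain ⟨b, hb⟩ := exists_eq_prodMatrixHom (pow_dvd_pow p hnm.le) F.toAddMonoidHom
    have hsurj := F.surjective
    rw [← AddEquiv.coe_toAddMonoidHom, hb] at hsurj
    obtain ⟨ha, hd⟩ := isUnit_of_prodMatrixHom_surjective hnm hn hsurj
    exact ⟨⟨ha.unit, b, (F (1, 0)).2, hd.unit⟩,
      AddEquiv.ext fun x => (DFunLike.congr_fun hb x).symm⟩

theorem card_addAut_prime_pow_prod (hnm : n < m) (hn : n ≠ 0) :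
    Nat.card (AddAut (ZMod (p ^ m) × ZMod (p ^ n))) = p ^ (m + 3 * n - 2) * (p - 1) ^ 2 := by
  have card_units (k : ℕ) (hk : k ≠ 0) : Nat.card (ZMod (p ^ k))ˣ = p ^ (k - 1) * (p - 1) := by
    rw [Nat.card_eq_fintype_card, card_units_eq_totient, Nat.totient_prime_pow hp.out hk.bot_lt]
  rw [← Nat.card_eq_of_bijective _ (prodMatrixAddAut_bijective hnm hn), Nat.card_prod,
    Nat.card_prod, Nat.card_prod, Nat.card_zmod, card_units m (by omega), card_units n hn,
    show m + 3 * n - 2 = (m - 1) + n + n + (n - 1) by omega]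
  ring

end PrimePower

end ZMod

theorem stmt9 (m n : ℕ) (hmn : m > n) (hn : 1 ≤ n) :
    Nat.card (MulAut (Multiplicative (ZMod (2 ^ m)) × Multiplicative (ZMod (2 ^ n))))
      = 2 ^ (m + 3 * n - 2) := by
  have e : Multiplicative (ZMod (2 ^ m)) × Multiplicative (ZMod (2 ^ n)) ≃*
      Multiplicative (ZMod (2 ^ m) × ZMod (2 ^ n)) :=
    (MulEquiv.prodMultiplicative (ZMod (2 ^ m)) (ZMod (2 ^ n))).symm
  rw [Nat.card_congr ((MulAut.congr e).toEquiv.trans AddEquiv.toMultiplicative.symm),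
    ZMod.card_addAut_prime_pow_prod hmn (by omega)]
  norm_num
end

section
/- Let F be a field of characteristic p, G a finite group, and x ∈ G. Let σ_x : Z(F[G]) → F[C_G(x)] denote the Brauer map sending a central element a = Σ_g a_g g to its truncation Σ_{g ∈ C_G(x)} a_g g. Then σ_x is an F-algebra homomorphism from the center of F[G] to the center of F[C_G(x)], provided x has p-power order. -/
/-!
Coefficients of a central element of `F[G]` are constant on conjugacy classes. For `g ∈ C_G(x)`
the coefficient of `g` in `a * b` is `∑ u, a u * b (u⁻¹ * g)`, and conjugation by `x` permutes
these terms, fixing exactly those with `u ∈ C_G(x)`. Since `x` is a `p`-element, the other terms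
fall into orbits of size divisible by `p` and cancel in characteristic `p`; what remains is the
coefficient of `g` in `σ_x a * σ_x b`.
-/

open MulAction Finset

namespace IsPGroup

variable {R : Type*} [Semiring R] {p : ℕ} [Fact p.Prime] [CharP R p]
  {P : Type*} [Group P] {X : Type*} [Fintype X] [MulAction P X]

theorem sum_eq_zero_of_eq_zero_on_fixedPoints (hP : IsPGroup p P) {f : X → R}
    (hf : ∀ (g : P) (u : X), f (g • u) = f u) (h0 : ∀ u ∈ fixedPoints P X, f u = 0) :
    ∑ u, f u = 0 := by
  classical
  rw [← sum_fiberwise univ (Quotient.mk (orbitRel P X)) f]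
  refine sum_eq_zero fun ω _ => ?_
  induction ω using Quotient.inductionOn with | h v => ?_
  have hfiber : univ.filter (fun u => Quotient.mk (orbitRel P X) u = Quotient.mk _ v) =
      (orbit P v).toFinset := by
    ext u
    simp [Quotient.eq, orbitRel_apply]
  have hconst : ∀ u ∈ (orbit P v).toFinset, f u = f v := by
    rintro u hu
    obtain ⟨g, rfl⟩ := Set.mem_toFinset.mp hu
    exact hf g v
  rw [hfiber, sum_congr rfl hconst, sum_const]
  by_cases hv : v ∈ fixedPoints P X
  · rw [h0 v hv, smul_zero]
  have hdvd : p ∣ (orbit P v).toFinset.card := by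
    obtain ⟨n, hn⟩ := hP.card_orbit v
    rw [Nat.card_eq_card_toFinset] at hn
    rcases n with _ | n
    · exact absurd (mem_fixedPoints_iff_card_orbit_eq_one.mpr (by simpa using hn)) hv
    · exact hn ▸ dvd_pow_self p n.succ_ne_zero
  rw [nsmul_eq_mul, (CharP.cast_eq_zero_iff R p _).mpr hdvd, zero_mul]

theorem sum_eq_sum_fixedPoints (hP : IsPGroup p P) {f : X → R}
    (hf : ∀ (g : P) (u : X), f (g • u) = f u) [DecidablePred (· ∈ fixedPoints P X)] :
    ∑ u, f u = ∑ u with u ∈ fixedPoints P X, f u := by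
  have hfix : ∀ (g : P) (u : X), g • u ∈ fixedPoints P X ↔ u ∈ fixedPoints P X := by
    refine fun g u => ⟨fun h => ?_, fun h => (h g).symm ▸ h⟩
    have hu : g⁻¹ • g • u = g • u := h g⁻¹
    rw [inv_smul_smul] at hu
    rwa [hu]
  have hnonfixed : ∑ u with u ∉ fixedPoints P X, f u = 0 := by
    rw [sum_filter]
    refine hP.sum_eq_zero_of_eq_zero_on_fixedPoints (fun g u => ?_)
      fun u hu => if_neg (not_not.mpr hu)
    simp only [hfix, hf]
  rw [← sum_filter_add_sum_filter_not univ (· ∈ fixedPoints P X), hnonfixed, add_zero]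

end IsPGroup

open ConjAct in
theorem fixedPoints_zpowers_toConjAct {G : Type*} [Group G] (x : G) :
    fixedPoints (Subgroup.zpowers (toConjAct x)) G = Subgroup.centralizer {x} := by
  ext u
  rw [SetLike.mem_coe, Subgroup.mem_centralizer_singleton_iff, mem_fixedPoints]
  constructor
  · intro hu
    have hxu : x * u * x⁻¹ = u := hu ⟨toConjAct x, Subgroup.mem_zpowers _⟩
    exact (mul_inv_eq_iff_eq_mul.mp hxu).symm
  · rintro hu ⟨c, hc⟩
    have hstab : Subgroup.zpowers (toConjAct x) ≤ stabilizer (ConjAct G) u := by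
      rw [Subgroup.zpowers_le, mem_stabilizer_iff, toConjAct_smul, ← hu, mul_inv_cancel_right]
    exact hstab hc

open ConjAct in
theorem sum_eq_sum_centralizer_of_conj_invariant {R : Type*} [Semiring R] {p : ℕ} [Fact p.Prime]
    [CharP R p] {G : Type*} [Group G] [Fintype G] {x : G} (hx : ∃ k, orderOf x = p ^ k)
    [Fintype (Subgroup.centralizer {x})] {f : G → R}
    (hf : ∀ y ∈ Subgroup.zpowers x, ∀ u, f (y * u * y⁻¹) = f u) :
    ∑ u, f u = ∑ u : Subgroup.centralizer {x}, f u := by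
  classical
  obtain ⟨k, hk⟩ := hx
  have hP : IsPGroup p (Subgroup.zpowers (toConjAct x)) :=
    IsPGroup.of_card (by rw [Nat.card_zpowers, MulEquiv.orderOf_eq, hk])
  have hinv (c : Subgroup.zpowers (toConjAct x)) (u : G) : f (c • u) = f u := by
    obtain ⟨c, hc⟩ := c
    obtain ⟨n, rfl⟩ := Subgroup.mem_zpowers_iff.mp hc
    refine hf _ ⟨n, ?_⟩ u
    simp
  rw [hP.sum_eq_sum_fixedPoints hinv]
  exact sum_subtype _ (by simp [← SetLike.mem_coe, fixedPoints_zpowers_toConjAct]) f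

namespace MonoidAlgebra

open Subgroup

variable {R G : Type*} [Group G]

section Semiring

variable [Semiring R]

theorem coeff_mul_apply_eq_sum [Fintype G] (a b : MonoidAlgebra R G) (g : G) :
    (a * b).coeff g = ∑ h, a.coeff h * b.coeff (h⁻¹ * g) := by
  rw [coeff_mul_apply_left, Finsupp.sum_fintype _ _ fun _ => zero_mul _]

noncomputable def truncate (H : Subgroup G) : MonoidAlgebra R G →ₗ[R] MonoidAlgebra R H :=
  (coeffLinearEquiv R).symm.toLinearMap ∘ₗ Finsupp.lcomapDomain _ Subtype.val_injective ∘ₗ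
    (coeffLinearEquiv R).toLinearMap

@[simp]
theorem coeff_truncate (H : Subgroup G) (a : MonoidAlgebra R G) (h : H) :
    (truncate H a).coeff h = a.coeff h :=
  rfl

theorem truncate_one (H : Subgroup G) : truncate H (1 : MonoidAlgebra R G) = 1 := by
  ext h
  rw [coeff_truncate]
  obtain rfl | hh := eq_or_ne h 1
  · rw [OneMemClass.coe_one, coeff_one_one, coeff_one_one]
  · rw [one_def, one_def, coeff_single, coeff_single, Finsupp.single_eq_of_ne hh,
      Finsupp.single_eq_of_ne (by exact_mod_cast hh)]

end Semiring

variable [CommSemiring R]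

theorem mem_center_iff_coeff_conj {a : MonoidAlgebra R G} :
    a ∈ Subalgebra.center R (MonoidAlgebra R G) ↔ ∀ g u, a.coeff (g * u * g⁻¹) = a.coeff u := by
  rw [Subalgebra.mem_center_iff]
  constructor
  · intro ha g u
    have hgu := congr_arg (fun b => b.coeff (g * u)) (ha (single g 1))
    simpa [coeff_mul_single_apply, coeff_single_mul_apply] using hgu.symm
  · intro ha b
    ext y
    rw [coeff_mul_apply_left, coeff_mul_apply_right]
    refine Finsupp.sum_congr fun z _ => ?_
    rw [mul_comm, ← ha z⁻¹ (y * z⁻¹)]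
    group

theorem truncate_mem_center (H : Subgroup G) {a : MonoidAlgebra R G}
    (ha : a ∈ Subalgebra.center R (MonoidAlgebra R G)) :
    truncate H a ∈ Subalgebra.center R (MonoidAlgebra R H) := by
  rw [mem_center_iff_coeff_conj] at ha ⊢
  intro g u
  simpa using ha g u

theorem truncate_centralizer_mul [Fintype G] {p : ℕ} [Fact p.Prime] [CharP R p] {x : G}
    (hx : ∃ k, orderOf x = p ^ k) {a b : MonoidAlgebra R G}
    (ha : a ∈ Subalgebra.center R (MonoidAlgebra R G))
    (hb : b ∈ Subalgebra.center R (MonoidAlgebra R G)) :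
    truncate (centralizer {x}) (a * b) = truncate _ a * truncate _ b := by
  classical
  rw [mem_center_iff_coeff_conj] at ha hb
  ext g
  rw [coeff_truncate, coeff_mul_apply_eq_sum, coeff_mul_apply_eq_sum]
  simp only [coeff_truncate, Subgroup.coe_mul, Subgroup.coe_inv]
  refine sum_eq_sum_centralizer_of_conj_invariant hx fun y hy u => ?_
  have hyg : Commute y⁻¹ g := by
    obtain ⟨n, rfl⟩ := mem_zpowers_iff.mp hy
    exact ((Commute.zpow_right (mem_centralizer_singleton_iff.mp g.2) n).symm).inv_left
  have hconj : (y * u * y⁻¹)⁻¹ * g = y * (u⁻¹ * g) * y⁻¹ := calc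
    (y * u * y⁻¹)⁻¹ * g = y * u⁻¹ * (y⁻¹ * g) := by group
    _ = y * u⁻¹ * (g * y⁻¹) := by rw [hyg.eq]
    _ = y * (u⁻¹ * g) * y⁻¹ := by group
  rw [hconj, ha, hb]

end MonoidAlgebra

/-- The Brauer map `σ_x`, i.e. the truncation `T` of coefficients to the
centralizer of `x`, is an `F`-algebra homomorphism from the center of `F[G]`
to the center of `F[C_G(x)]` when `x` has `p`-power order. -/
theorem stmt15 (F : Type*) [Field F] (p : ℕ) [Fact p.Prime] [CharP F p]
    (G : Type*) [Group G] [Fintype G] (x : G) (hx : ∃ k : ℕ, orderOf x = p ^ k)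
    (T : MonoidAlgebra F G → MonoidAlgebra F (Subgroup.centralizer {x}))
    (hT : ∀ (a : MonoidAlgebra F G) (g : Subgroup.centralizer ({x} : Set G)),
      (T a).coeff g = a.coeff (g : G)) :
    T 1 = 1 ∧
    ∀ a ∈ Subalgebra.center F (MonoidAlgebra F G),
      ∀ b ∈ Subalgebra.center F (MonoidAlgebra F G),
        T a ∈ Subalgebra.center F (MonoidAlgebra F (Subgroup.centralizer ({x} : Set G))) ∧
        T (a + b) = T a + T b ∧
        T (a * b) = T a * T b ∧
        ∀ c : F, T (c • a) = c • T a := by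
  obtain rfl : T = MonoidAlgebra.truncate (Subgroup.centralizer {x}) :=
    funext fun a => by ext g; exact hT a g
  exact ⟨MonoidAlgebra.truncate_one _, fun a ha b hb =>
    ⟨MonoidAlgebra.truncate_mem_center _ ha, map_add _ a b,
      MonoidAlgebra.truncate_centralizer_mul hx ha hb, fun c => map_smul _ c a⟩⟩
end

section
/- Let F be a field of characteristic p, G a finite group, x ∈ G of p-power order q, and y ∈ C_G(x) a p-regular element. Suppose a ∈ Z(F[G]) and the truncation σ_x(a) = Σ_{g ∈ C_G(x)} a_g g satisfies x·σ_x(a) = σ_x(a) in F[C_G(x)]. Then a_{xy} = a_y. -/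
theorem MonoidAlgebra.coeff_mul_left_eq_of_of_mul_eq {R H : Type*} [Semiring R] [Group H]
    {f : MonoidAlgebra R H} {h : H} (hf : MonoidAlgebra.of R H h * f = f) (g : H) :
    f.coeff (h * g) = f.coeff g := by
  conv_lhs => rw [← hf]
  simp only [MonoidAlgebra.of_apply, MonoidAlgebra.coeff_single_mul_apply, one_mul,
    inv_mul_cancel_left]

theorem stmt16_general (F : Type*) [Field F]
    (G : Type*) [Group G] (x : G)
    (hxc : x ∈ Subgroup.centralizer ({x} : Set G))
    (y : G) (hy : y ∈ Subgroup.centralizer ({x} : Set G))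
    (T : MonoidAlgebra F G → MonoidAlgebra F (Subgroup.centralizer ({x} : Set G)))
    (hT : ∀ (a : MonoidAlgebra F G) (g : Subgroup.centralizer ({x} : Set G)),
      (T a).coeff g = a.coeff (g : G))
    (a : MonoidAlgebra F G)
    (hfix : MonoidAlgebra.of F (Subgroup.centralizer ({x} : Set G)) ⟨x, hxc⟩ * T a = T a) :
    a.coeff (x * y) = a.coeff y := by
  have h := MonoidAlgebra.coeff_mul_left_eq_of_of_mul_eq hfix ⟨y, hy⟩
  rwa [hT, hT] at h

/-- If `a` is central in `F[G]`, `x` has `p`-power order, `y` is a `p`-regular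
element of `C_G(x)`, and left multiplication by `x` fixes the truncation
`σ_x(a) = T a`, then the coefficients of `a` at `x*y` and `y` agree. -/
theorem stmt16 (F : Type*) [Field F] (p : ℕ) [Fact p.Prime] [CharP F p]
    (G : Type*) [Group G] [Fintype G] (x : G) (hx : ∃ k : ℕ, orderOf x = p ^ k)
    (hxc : x ∈ Subgroup.centralizer ({x} : Set G))
    (y : G) (hy : y ∈ Subgroup.centralizer ({x} : Set G))
    (hyreg : ¬ p ∣ orderOf y)
    (T : MonoidAlgebra F G → MonoidAlgebra F (Subgroup.centralizer ({x} : Set G)))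
    (hT : ∀ (a : MonoidAlgebra F G) (g : Subgroup.centralizer ({x} : Set G)),
      (T a).coeff g = a.coeff (g : G))
    (a : MonoidAlgebra F G) (ha : a ∈ Subalgebra.center F (MonoidAlgebra F G))
    (hfix : MonoidAlgebra.of F (Subgroup.centralizer ({x} : Set G)) ⟨x, hxc⟩ * T a = T a) :
    a.coeff (x * y) = a.coeff y :=
  stmt16_general F G x hxc y hy T hT a hfix
end
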